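/- arXiv:1511.07536 — 7 statements merged into one kernel-verified Lean document; each statement's English description precedes it below -/
import Mathlib

section
/- Let μ be a probability measure on a measurable space Ω, let A₁, A₂, C be measurable sets, and let r₁, r₂ ∈ [0,1]. If μ(A₁ ∩ C) ≥ (1 − r₁)·μ(A₁) and μ(A₂ ∩ C) ≥ (1 − r₂)·μ(A₂), then μ((A₁ ∪ A₂) ∩ C) ≥ (1 − min(max(2r₁, 2r₂), 1))·μ(A₁ ∪ A₂). (This is the semantic soundness of the quantitative conditional-logic rule OR^q: from φ₁ ⇒^{r₁} ψ and φ₂ ⇒^{r₂} ψ infer (φ₁ ∨ φ₂) ⇒^{min(max(2r₁,2r₂),1)} ψ.) -/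
open MeasureTheory

/-- Soundness of the quantitative conditional-logic rule OR^q. -/
theorem ORq_sound {Ω : Type*} [MeasurableSpace Ω]
    (μ : Measure Ω) [IsProbabilityMeasure μ] (A₁ A₂ C : Set Ω)
    (hA₁ : MeasurableSet A₁) (hA₂ : MeasurableSet A₂) (hC : MeasurableSet C)
    (r₁ r₂ : ℝ) (hr₁0 : 0 ≤ r₁) (hr₁1 : r₁ ≤ 1) (hr₂0 : 0 ≤ r₂) (hr₂1 : r₂ ≤ 1)
    (h₁ : ENNReal.ofReal (1 - r₁) * μ A₁ ≤ μ (A₁ ∩ C))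
    (h₂ : ENNReal.ofReal (1 - r₂) * μ A₂ ≤ μ (A₂ ∩ C)) :
    ENNReal.ofReal (1 - min (max (2 * r₁) (2 * r₂)) 1) * μ (A₁ ∪ A₂) ≤
      μ ((A₁ ∪ A₂) ∩ C) := by
  set k : ℝ := min (max (2 * r₁) (2 * r₂)) 1 with hk
  have hk0 : 0 ≤ k := le_min (le_max_of_le_left (by linarith)) zero_le_one
  -- reduce to real numbers
  set a := (μ A₁).toReal
  set b := (μ A₂).toReal
  set c := (μ (A₁ ∩ C)).toReal
  set d := (μ (A₂ ∩ C)).toReal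
  set u := (μ (A₁ ∪ A₂)).toReal
  set i := (μ (A₁ ∩ A₂)).toReal
  set t := (μ ((A₁ ∪ A₂) ∩ C)).toReal
  set j := (μ ((A₁ ∩ C) ∩ (A₂ ∩ C))).toReal
  have hfin : ∀ s : Set Ω, μ s ≠ ⊤ := fun s => measure_ne_top μ s
  have h₁' : (1 - r₁) * a ≤ c := by
    have := ENNReal.toReal_mono (hfin _) h₁
    rwa [ENNReal.toReal_mul, ENNReal.toReal_ofReal (by linarith)] at this
  have h₂' : (1 - r₂) * b ≤ d := by
    have := ENNReal.toReal_mono (hfin _) h₂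
    rwa [ENNReal.toReal_mul, ENNReal.toReal_ofReal (by linarith)] at this
  have hie1 : u + i = a + b := by
    have := measure_union_add_inter (μ := μ) A₁ hA₂
    have := congrArg ENNReal.toReal this
    rwa [ENNReal.toReal_add (hfin _) (hfin _), ENNReal.toReal_add (hfin _) (hfin _)] at this
  have hie2 : t + j = c + d := by
    have := measure_union_add_inter (μ := μ) (A₁ ∩ C) (hA₂.inter hC)
    have := congrArg ENNReal.toReal this
    rw [ENNReal.toReal_add (hfin _) (hfin _), ENNReal.toReal_add (hfin _) (hfin _)] at this
    have hset : (A₁ ∩ C) ∪ (A₂ ∩ C) = (A₁ ∪ A₂) ∩ C := (Set.union_inter_distrib_right A₁ A₂ C).symm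
    rwa [hset] at this
  have hji : j ≤ i := by
    apply ENNReal.toReal_mono (hfin _)
    apply measure_mono
    exact Set.inter_subset_inter Set.inter_subset_left Set.inter_subset_left
  have hia : i ≤ a := ENNReal.toReal_mono (hfin _) (measure_mono Set.inter_subset_left)
  have hib : i ≤ b := ENNReal.toReal_mono (hfin _) (measure_mono Set.inter_subset_right)
  have hj0 : 0 ≤ j := ENNReal.toReal_nonneg
  have ht0 : 0 ≤ t := ENNReal.toReal_nonneg
  have hu0 : 0 ≤ u := ENNReal.toReal_nonneg
  have hmain : (1 - k) * u ≤ t := by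
    rcases le_or_gt 1 (max (2 * r₁) (2 * r₂)) with h | h
    · have : k = 1 := min_eq_right h
      rw [this]; simpa using ht0
    · have hk' : k = max (2 * r₁) (2 * r₂) := min_eq_left h.le
      have h1 : 2 * r₁ ≤ k := hk' ▸ le_max_left _ _
      have h2 : 2 * r₂ ≤ k := hk' ▸ le_max_right _ _
      have hui : i ≤ u := by nlinarith
      nlinarith [mul_nonneg hk0 (sub_nonneg.2 hui)]
  calc ENNReal.ofReal (1 - k) * μ (A₁ ∪ A₂)
      = ENNReal.ofReal (1 - k) * ENNReal.ofReal u := by rw [ENNReal.ofReal_toReal (hfin _)]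
    _ = ENNReal.ofReal ((1 - k) * u) := (ENNReal.ofReal_mul
          (by have := min_le_right (max (2 * r₁) (2 * r₂)) 1; linarith)).symm
    _ ≤ ENNReal.ofReal t := ENNReal.ofReal_le_ofReal hmain
    _ = μ ((A₁ ∪ A₂) ∩ C) := ENNReal.ofReal_toReal (hfin _)
end

section
/- Let μ be a probability measure on a measurable space Ω, let A, B, C be measurable sets, and let r₁, r₂ ∈ [0,1]. If μ(A ∩ B) ≥ (1 − r₁)·μ(A) and μ(A ∩ C) ≥ (1 − r₂)·μ(A), then μ(A ∩ B ∩ C) ≥ (1 − min(r₁ + r₂, 1))·μ(A ∩ B). (This is the semantic soundness of the quantitative cautious-monotonicity rule CM^q: from φ₁ ⇒^{r₁} φ₂ and φ₁ ⇒^{r₂} ψ infer (φ₁ ∧ φ₂) ⇒^{min(r₁+r₂,1)} ψ.) -/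
/-! Inclusion–exclusion gives `μ (A ∩ B) + μ (A ∩ C) ≤ μ A + μ (A ∩ B ∩ C)`, hence
`μ (A ∩ B ∩ C) ≥ (1 - r₁ - r₂) μ A ≥ (1 - r₁ - r₂) μ (A ∩ B)`, the subtraction of `μ A` being
legitimate because `μ A` is finite. When `r₁ + r₂ ≥ 1` the claimed bound is `0`. -/

open MeasureTheory

theorem measure_inter_add_measure_inter_le {Ω : Type*} [MeasurableSpace Ω] (μ : Measure Ω)
    (A B : Set Ω) {C : Set Ω} (hC : MeasurableSet C) :
    μ (A ∩ B) + μ (A ∩ C) ≤ μ A + μ (A ∩ B ∩ C) := by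
  have hAB : μ (A ∩ B) ≤ μ (A ∩ B ∩ C) + μ (A \ C) :=
    calc μ (A ∩ B) ≤ μ (A ∩ B ∩ C) + μ ((A ∩ B) \ C) := measure_le_inter_add_sdiff μ _ C
      _ ≤ μ (A ∩ B ∩ C) + μ (A \ C) := by
        gcongr
        exact Set.inter_subset_left
  calc μ (A ∩ B) + μ (A ∩ C) ≤ μ (A ∩ B ∩ C) + μ (A \ C) + μ (A ∩ C) := add_le_add_left hAB _
    _ = μ A + μ (A ∩ B ∩ C) := by
      rw [add_assoc, add_comm (μ (A \ C)), measure_inter_add_sdiff A hC, add_comm]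

theorem mul_measure_inter_le_measure_inter_inter {Ω : Type*} [MeasurableSpace Ω] (μ : Measure Ω)
    {A B C : Set Ω} (hC : MeasurableSet C) (hA : μ A ≠ ⊤) {a b c : ENNReal}
    (habc : c + 1 ≤ a + b) (hAB : a * μ A ≤ μ (A ∩ B)) (hAC : b * μ A ≤ μ (A ∩ C)) :
    c * μ (A ∩ B) ≤ μ (A ∩ B ∩ C) := by
  have h : μ A + c * μ A ≤ μ A + μ (A ∩ B ∩ C) :=
    calc μ A + c * μ A = (c + 1) * μ A := by ring
      _ ≤ (a + b) * μ A := by gcongr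
      _ = a * μ A + b * μ A := add_mul a b _
      _ ≤ μ (A ∩ B) + μ (A ∩ C) := add_le_add hAB hAC
      _ ≤ μ A + μ (A ∩ B ∩ C) := measure_inter_add_measure_inter_le μ A B hC
  calc c * μ (A ∩ B) ≤ c * μ A := by gcongr; exact Set.inter_subset_left
    _ ≤ μ (A ∩ B ∩ C) := (ENNReal.add_le_add_iff_left hA).mp h

theorem ENNReal.ofReal_one_sub_add_add_one_le {r₁ r₂ : ℝ} (h : r₁ + r₂ < 1) :
    ENNReal.ofReal (1 - (r₁ + r₂)) + 1 ≤ ENNReal.ofReal (1 - r₁) + ENNReal.ofReal (1 - r₂) :=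
  calc ENNReal.ofReal (1 - (r₁ + r₂)) + 1 = ENNReal.ofReal ((1 - r₁) + (1 - r₂)) := by
        rw [← ENNReal.ofReal_one, ← ENNReal.ofReal_add (by linarith) zero_le_one]
        ring_nf
    _ ≤ ENNReal.ofReal (1 - r₁) + ENNReal.ofReal (1 - r₂) := ENNReal.ofReal_add_le

theorem CMq_sound_general {Ω : Type*} [MeasurableSpace Ω]
    (μ : Measure Ω) [IsProbabilityMeasure μ] (A B C : Set Ω)
    (hC : MeasurableSet C)
    (r₁ r₂ : ℝ)
    (h₁ : ENNReal.ofReal (1 - r₁) * μ A ≤ μ (A ∩ B))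
    (h₂ : ENNReal.ofReal (1 - r₂) * μ A ≤ μ (A ∩ C)) :
    ENNReal.ofReal (1 - min (r₁ + r₂) 1) * μ (A ∩ B) ≤ μ (A ∩ B ∩ C) := by
  rcases le_or_gt 1 (r₁ + r₂) with h | h
  · simp [min_eq_right h]
  · rw [min_eq_left h.le]
    exact mul_measure_inter_le_measure_inter_inter μ hC (measure_ne_top μ A)
      (ENNReal.ofReal_one_sub_add_add_one_le h) h₁ h₂

/-- Soundness of the quantitative cautious-monotonicity rule CM^q. -/
theorem CMq_sound {Ω : Type*} [MeasurableSpace Ω]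
    (μ : Measure Ω) [IsProbabilityMeasure μ] (A B C : Set Ω)
    (hA : MeasurableSet A) (hB : MeasurableSet B) (hC : MeasurableSet C)
    (r₁ r₂ : ℝ) (hr₁0 : 0 ≤ r₁) (hr₁1 : r₁ ≤ 1) (hr₂0 : 0 ≤ r₂) (hr₂1 : r₂ ≤ 1)
    (h₁ : ENNReal.ofReal (1 - r₁) * μ A ≤ μ (A ∩ B))
    (h₂ : ENNReal.ofReal (1 - r₂) * μ A ≤ μ (A ∩ C)) :
    ENNReal.ofReal (1 - min (r₁ + r₂) 1) * μ (A ∩ B) ≤ μ (A ∩ B ∩ C) :=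
  CMq_sound_general μ A B C hC r₁ r₂ h₁ h₂
end

section
/- Let μ be a probability measure on a measurable space Ω, let A, B, C be measurable sets, and let r₁, r₂ ∈ [0,1]. If μ(A ∩ C) ≥ (1 − r₁)·μ(A) and μ(B ∩ C) ≥ (1 − r₂)·μ(B), then μ((A ∪ B) ∩ Cᶜ) ≤ 2·max(r₁, r₂)·μ(A ∪ B). (This is the key inequality underlying the soundness of the quantitative disjunction rule OR^q, using that μ(A) + μ(B) ≤ 2·μ(A ∪ B).) -/
open MeasureTheory

lemma ORq_aux {Ω : Type*} [MeasurableSpace Ω]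
    (μ : Measure Ω) [IsProbabilityMeasure μ] (A C : Set Ω)
    (hC : MeasurableSet C) (r : ℝ) (hr0 : 0 ≤ r) (hr1 : r ≤ 1)
    (h : ENNReal.ofReal (1 - r) * μ A ≤ μ (A ∩ C)) :
    μ (A ∩ Cᶜ) ≤ ENNReal.ofReal r * μ A := by
  have hsum : μ (A ∩ C) + μ (A \ C) = μ A := measure_inter_add_diff A hC
  have hdiff : A ∩ Cᶜ = A \ C := rfl
  have hfin : μ (A ∩ C) ≠ ⊤ := (measure_lt_top μ _).ne
  have h1 : μ (A ∩ Cᶜ) = μ A - μ (A ∩ C) := by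
    rw [hdiff, ← hsum, ENNReal.add_sub_cancel_left hfin]
  rw [h1]
  calc μ A - μ (A ∩ C) ≤ μ A - ENNReal.ofReal (1 - r) * μ A :=
        tsub_le_tsub_left h _
    _ = (1 - ENNReal.ofReal (1 - r)) * μ A := by
        rw [ENNReal.sub_mul (fun _ _ => (measure_lt_top μ A).ne), one_mul]
    _ = ENNReal.ofReal r * μ A := by
        congr 1
        rw [← ENNReal.ofReal_one, ← ENNReal.ofReal_sub _ (by linarith)]
        norm_num

/-- Key inequality underlying the soundness of the quantitative disjunction
rule OR^q. -/
theorem ORq_key {Ω : Type*} [MeasurableSpace Ω]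
    (μ : Measure Ω) [IsProbabilityMeasure μ] (A B C : Set Ω)
    (hA : MeasurableSet A) (hB : MeasurableSet B) (hC : MeasurableSet C)
    (r₁ r₂ : ℝ) (hr₁0 : 0 ≤ r₁) (hr₁1 : r₁ ≤ 1) (hr₂0 : 0 ≤ r₂) (hr₂1 : r₂ ≤ 1)
    (h₁ : ENNReal.ofReal (1 - r₁) * μ A ≤ μ (A ∩ C))
    (h₂ : ENNReal.ofReal (1 - r₂) * μ B ≤ μ (B ∩ C)) :
    μ ((A ∪ B) ∩ Cᶜ) ≤ ENNReal.ofReal (2 * max r₁ r₂) * μ (A ∪ B) := by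
  set m := max r₁ r₂ with hm
  have hA' := ORq_aux μ A C hC r₁ hr₁0 hr₁1 h₁
  have hB' := ORq_aux μ B C hC r₂ hr₂0 hr₂1 h₂
  have hAm : μ (A ∩ Cᶜ) ≤ ENNReal.ofReal m * μ A :=
    hA'.trans (mul_le_mul_left (ENNReal.ofReal_le_ofReal (le_max_left _ _)) _)
  have hBm : μ (B ∩ Cᶜ) ≤ ENNReal.ofReal m * μ B :=
    hB'.trans (mul_le_mul_left (ENNReal.ofReal_le_ofReal (le_max_right _ _)) _)
  have hunion : (A ∪ B) ∩ Cᶜ = (A ∩ Cᶜ) ∪ (B ∩ Cᶜ) := Set.union_inter_distrib_right A B Cᶜ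
  calc μ ((A ∪ B) ∩ Cᶜ) ≤ μ (A ∩ Cᶜ) + μ (B ∩ Cᶜ) := by
        rw [hunion]; exact measure_union_le _ _
    _ ≤ ENNReal.ofReal m * μ A + ENNReal.ofReal m * μ B := add_le_add hAm hBm
    _ = ENNReal.ofReal m * (μ A + μ B) := (mul_add _ _ _).symm
    _ ≤ ENNReal.ofReal m * (μ (A ∪ B) + μ (A ∪ B)) :=
        mul_le_mul_right (add_le_add (measure_mono Set.subset_union_left)
          (measure_mono Set.subset_union_right)) _
    _ = ENNReal.ofReal (2 * m) * μ (A ∪ B) := by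
        rw [ENNReal.ofReal_mul (by norm_num), ENNReal.ofReal_ofNat, two_mul, mul_add,
          add_mul]
end

section
/- Let (μₙ)_{n∈ℕ} be a sequence of probability measures on a measurable space Ω and let A, B₁, B₂ be measurable sets. Suppose that for every k ∈ ℕ there exists N such that for all n ≥ N, μₙ(A ∩ B₁) ≥ (1 − 1/n^k)·μₙ(A), and likewise for every k there exists N such that for all n ≥ N, μₙ(A ∩ B₂) ≥ (1 − 1/n^k)·μₙ(A). Then for every k ∈ ℕ there exists N such that for all n ≥ N, μₙ(A ∩ B₁ ∩ B₂) ≥ (1 − 1/n^k)·μₙ(A). (This is the soundness of the KLM rule AND under the super-polynomial ε-semantics.) -/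
open MeasureTheory

/-- Soundness of the KLM rule AND under the super-polynomial ε-semantics. -/
theorem KLM_AND_superpoly {Ω : Type*} [MeasurableSpace Ω]
    (μ : ℕ → Measure Ω) (hμ : ∀ n, IsProbabilityMeasure (μ n))
    (A B₁ B₂ : Set Ω)
    (hA : MeasurableSet A) (hB₁ : MeasurableSet B₁) (hB₂ : MeasurableSet B₂)
    (h₁ : ∀ k : ℕ, ∃ N : ℕ, ∀ n ≥ N,
      ENNReal.ofReal (1 - 1 / (n : ℝ) ^ k) * μ n A ≤ μ n (A ∩ B₁))
    (h₂ : ∀ k : ℕ, ∃ N : ℕ, ∀ n ≥ N,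
      ENNReal.ofReal (1 - 1 / (n : ℝ) ^ k) * μ n A ≤ μ n (A ∩ B₂)) :
    ∀ k : ℕ, ∃ N : ℕ, ∀ n ≥ N,
      ENNReal.ofReal (1 - 1 / (n : ℝ) ^ k) * μ n A ≤ μ n (A ∩ B₁ ∩ B₂) := by
  intro k
  obtain ⟨N₁, hN₁⟩ := h₁ (k + 1)
  obtain ⟨N₂, hN₂⟩ := h₂ (k + 1)
  refine ⟨max (max N₁ N₂) 2, fun n hn => ?_⟩
  have hn1 : n ≥ N₁ := le_trans (le_trans (le_max_left _ _) (le_max_left _ _)) hn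
  have hn2 : n ≥ N₂ := le_trans (le_trans (le_max_right _ _) (le_max_left _ _)) hn
  have hn3 : (2 : ℕ) ≤ n := le_trans (le_max_right _ _) hn
  have hnR : (2 : ℝ) ≤ (n : ℝ) := by exact_mod_cast hn3
  have hnpos : (0 : ℝ) < (n : ℝ) := by linarith
  haveI := hμ n
  -- abbreviations
  set a := μ n A with ha
  set x := μ n (A ∩ B₁) with hx
  set y := μ n (A ∩ B₂) with hy
  set z := μ n (A ∩ B₁ ∩ B₂) with hz
  have hafin : a ≠ ⊤ := measure_ne_top _ _
  have hxfin : x ≠ ⊤ := measure_ne_top _ _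
  have hyfin : y ≠ ⊤ := measure_ne_top _ _
  have hzfin : z ≠ ⊤ := measure_ne_top _ _
  -- c = 1/n^(k+1), nonneg and ≤ 1
  have hpk : (1 : ℝ) ≤ (n : ℝ) ^ (k + 1) := one_le_pow₀ (by linarith)
  have hpk' : (0 : ℝ) < (n : ℝ) ^ k := by positivity
  set c : ℝ := 1 / (n : ℝ) ^ (k + 1) with hc
  have hc0 : 0 ≤ c := by positivity
  have hc1 : c ≤ 1 := by rw [hc]; exact div_le_one_of_le₀ hpk (by positivity)
  -- real-side hypotheses
  have hx' : (1 - c) * a.toReal ≤ x.toReal := by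
    have := hN₁ n hn1
    have h := ENNReal.toReal_mono hxfin this
    rwa [ENNReal.toReal_mul, ENNReal.toReal_ofReal (by linarith)] at h
  have hy' : (1 - c) * a.toReal ≤ y.toReal := by
    have := hN₂ n hn2
    have h := ENNReal.toReal_mono hyfin this
    rwa [ENNReal.toReal_mul, ENNReal.toReal_ofReal (by linarith)] at h
  -- z ≥ x - (a - y)
  have hsub : A ∩ B₁ ⊆ (A ∩ B₁ ∩ B₂) ∪ (A \ B₂) := by
    intro ω hω
    by_cases hb : ω ∈ B₂
    · exact Or.inl ⟨hω, hb⟩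
    · exact Or.inr ⟨hω.1, hb⟩
  have hxle : x ≤ z + μ n (A \ B₂) :=
    le_trans (measure_mono hsub) (measure_union_le _ _)
  have hdiff : μ n (A \ B₂) = a - y := by
    have : A \ B₂ = A \ (A ∩ B₂) := by ext ω; simp
    rw [this, measure_diff Set.inter_subset_left (hA.inter hB₂).nullMeasurableSet
      (measure_ne_top _ _)]
  have hya : y ≤ a := measure_mono Set.inter_subset_left
  have hdiff' : (μ n (A \ B₂)).toReal = a.toReal - y.toReal := by
    rw [hdiff, ENNReal.toReal_sub_of_le hya hafin]
  have hx2 : x.toReal ≤ z.toReal + (a.toReal - y.toReal) := by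
    have h := ENNReal.toReal_mono (by finiteness) hxle
    rwa [ENNReal.toReal_add hzfin (measure_ne_top _ _), hdiff'] at h
  -- arithmetic: (1 - 1/n^k) * a' ≤ z'
  have h2c : 2 * c ≤ 1 / (n : ℝ) ^ k := by
    rw [hc, pow_succ, mul_one_div, div_le_div_iff₀ (by positivity) hpk']
    nlinarith
  have ha0 : 0 ≤ a.toReal := ENNReal.toReal_nonneg
  have ht0 : (0:ℝ) ≤ 1 - 1 / (n : ℝ) ^ k := by
    have : (1:ℝ) ≤ (n : ℝ) ^ k := one_le_pow₀ (by linarith)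
    have : 1 / (n : ℝ) ^ k ≤ 1 := div_le_one_of_le₀ this (by positivity)
    linarith
  have hz' : (1 - 1 / (n : ℝ) ^ k) * a.toReal ≤ z.toReal := by nlinarith
  -- back to ENNReal
  calc ENNReal.ofReal (1 - 1 / (n : ℝ) ^ k) * a
      = ENNReal.ofReal ((1 - 1 / (n : ℝ) ^ k) * a.toReal) := by
        rw [ENNReal.ofReal_mul ht0, ENNReal.ofReal_toReal hafin]
    _ ≤ z := by
        rw [← ENNReal.ofReal_toReal hzfin]
        exact ENNReal.ofReal_le_ofReal hz'
end

section
/- Let (μₙ)_{n∈ℕ} be a sequence of probability measures on a measurable space Ω and let A₁, A₂, C be measurable sets. Suppose that for every k ∈ ℕ there exists N such that for all n ≥ N, μₙ(A₁ ∩ C) ≥ (1 − 1/n^k)·μₙ(A₁), and likewise for every k there exists N such that for all n ≥ N, μₙ(A₂ ∩ C) ≥ (1 − 1/n^k)·μₙ(A₂). Then for every k ∈ ℕ there exists N such that for all n ≥ N, μₙ((A₁ ∪ A₂) ∩ C) ≥ (1 − 1/n^k)·μₙ(A₁ ∪ A₂). (This is the soundness of the KLM disjunction rule OR under the super-polynomial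 ε-semantics.) -/
/-!
Write `ε = 1 / n ^ (k + 1)`. For a finite measure and measurable `C`, the bound
`(1 - ε) μ(A) ≤ μ(A ∩ C)` is equivalent to `μ(A \ C) ≤ ε μ(A)`, and the exceptional
parts `A \ C` are subadditive under unions. Hence `μ((A₁ ∪ A₂) \ C) ≤ 2ε μ(A₁ ∪ A₂)`,
and `2ε ≤ 1 / n ^ k` once `n ≥ 2`: the factor 2 lost by the union is absorbed by one
extra power of `n`, which the super-polynomial hypotheses provide for free.
-/

open MeasureTheory

lemma two_mul_one_div_pow_succ_le {x : ℝ} (hx : 2 ≤ x) (k : ℕ) :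
    2 * (1 / x ^ (k + 1)) ≤ 1 / x ^ k := by
  have hxk : 0 < x ^ k := by positivity
  rw [pow_succ, mul_one_div, div_le_div_iff₀ (by positivity) hxk]
  nlinarith

lemma one_div_pow_le_one {x : ℝ} (hx : 1 ≤ x) (k : ℕ) : 1 / x ^ k ≤ 1 :=
  div_le_one_of_le₀ (one_le_pow₀ hx) (by positivity)

section

variable {Ω : Type*} [MeasurableSpace Ω] {μ : Measure Ω} {A A₁ A₂ C : Set Ω} {ε : ℝ}

lemma ofReal_one_sub_mul_le_measure_inter_iff [IsFiniteMeasure μ] (hC : MeasurableSet C)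
    (hε₀ : 0 ≤ ε) (hε₁ : ε ≤ 1) :
    ENNReal.ofReal (1 - ε) * μ A ≤ μ (A ∩ C) ↔ μ (A \ C) ≤ ENNReal.ofReal ε * μ A := by
  have hsplit_set : μ (A ∩ C) + μ (A \ C) = μ A := measure_inter_add_sdiff₀ A hC.nullMeasurableSet
  have hsplit_mass : ENNReal.ofReal (1 - ε) * μ A + ENNReal.ofReal ε * μ A = μ A := by
    rw [← add_mul, ← ENNReal.ofReal_add (by linarith) hε₀, sub_add_cancel, ENNReal.ofReal_one,
      one_mul]
  have hfin : ENNReal.ofReal (1 - ε) * μ A ≠ ⊤ :=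
    ENNReal.mul_ne_top ENNReal.ofReal_ne_top (measure_ne_top μ A)
  calc ENNReal.ofReal (1 - ε) * μ A ≤ μ (A ∩ C)
      ↔ ENNReal.ofReal (1 - ε) * μ A + μ (A \ C) ≤ μ (A ∩ C) + μ (A \ C) :=
        (ENNReal.add_le_add_iff_right (measure_ne_top μ _)).symm
    _ ↔ ENNReal.ofReal (1 - ε) * μ A + μ (A \ C)
          ≤ ENNReal.ofReal (1 - ε) * μ A + ENNReal.ofReal ε * μ A := by
        rw [hsplit_set, hsplit_mass]
    _ ↔ μ (A \ C) ≤ ENNReal.ofReal ε * μ A := ENNReal.add_le_add_iff_left hfin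

lemma measure_union_diff_le_of_measure_diff_le (hε₀ : 0 ≤ ε)
    (h₁ : μ (A₁ \ C) ≤ ENNReal.ofReal ε * μ A₁) (h₂ : μ (A₂ \ C) ≤ ENNReal.ofReal ε * μ A₂) :
    μ ((A₁ ∪ A₂) \ C) ≤ ENNReal.ofReal (2 * ε) * μ (A₁ ∪ A₂) :=
  calc μ ((A₁ ∪ A₂) \ C) ≤ μ (A₁ \ C) + μ (A₂ \ C) := by
        rw [Set.union_sdiff_distrib]; exact measure_union_le _ _
    _ ≤ ENNReal.ofReal ε * μ (A₁ ∪ A₂) + ENNReal.ofReal ε * μ (A₁ ∪ A₂) := by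
        gcongr
        exacts [h₁.trans (by gcongr; exact Set.subset_union_left),
          h₂.trans (by gcongr; exact Set.subset_union_right)]
    _ = ENNReal.ofReal (2 * ε) * μ (A₁ ∪ A₂) := by
        rw [← add_mul, ← ENNReal.ofReal_add hε₀ hε₀, two_mul]

end

theorem KLM_OR_superpoly_general {Ω : Type*} [MeasurableSpace Ω]
    (μ : ℕ → Measure Ω) (hμ : ∀ n, IsProbabilityMeasure (μ n))
    (A₁ A₂ C : Set Ω)
    (hC : MeasurableSet C)
    (h₁ : ∀ k : ℕ, ∃ N : ℕ, ∀ n ≥ N,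
      ENNReal.ofReal (1 - 1 / (n : ℝ) ^ k) * μ n A₁ ≤ μ n (A₁ ∩ C))
    (h₂ : ∀ k : ℕ, ∃ N : ℕ, ∀ n ≥ N,
      ENNReal.ofReal (1 - 1 / (n : ℝ) ^ k) * μ n A₂ ≤ μ n (A₂ ∩ C)) :
    ∀ k : ℕ, ∃ N : ℕ, ∀ n ≥ N,
      ENNReal.ofReal (1 - 1 / (n : ℝ) ^ k) * μ n (A₁ ∪ A₂) ≤
        μ n ((A₁ ∪ A₂) ∩ C) := by
  intro k
  obtain ⟨N₁, hN₁⟩ := h₁ (k + 1)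
  obtain ⟨N₂, hN₂⟩ := h₂ (k + 1)
  refine ⟨max (max N₁ N₂) 2, fun n hn => ?_⟩
  simp only [ge_iff_le, max_le_iff] at hn
  obtain ⟨⟨hn₁, hn₂⟩, hn⟩ := hn
  have hx : (2 : ℝ) ≤ n := by exact_mod_cast hn
  have hε₀ : (0 : ℝ) ≤ 1 / (n : ℝ) ^ (k + 1) := by positivity
  have hε₁ : 1 / (n : ℝ) ^ (k + 1) ≤ 1 := one_div_pow_le_one (by linarith) (k + 1)
  rw [ofReal_one_sub_mul_le_measure_inter_iff hC (by positivity)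
    (one_div_pow_le_one (by linarith) k)]
  have hdiff₁ := (ofReal_one_sub_mul_le_measure_inter_iff hC hε₀ hε₁).mp (hN₁ n hn₁)
  have hdiff₂ := (ofReal_one_sub_mul_le_measure_inter_iff hC hε₀ hε₁).mp (hN₂ n hn₂)
  calc μ n ((A₁ ∪ A₂) \ C)
      ≤ ENNReal.ofReal (2 * (1 / (n : ℝ) ^ (k + 1))) * μ n (A₁ ∪ A₂) :=
        measure_union_diff_le_of_measure_diff_le hε₀ hdiff₁ hdiff₂
    _ ≤ ENNReal.ofReal (1 / (n : ℝ) ^ k) * μ n (A₁ ∪ A₂) := by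
        gcongr; exact two_mul_one_div_pow_succ_le hx k

/-- Soundness of the KLM disjunction rule OR under the super-polynomial
ε-semantics. -/
theorem KLM_OR_superpoly {Ω : Type*} [MeasurableSpace Ω]
    (μ : ℕ → Measure Ω) (hμ : ∀ n, IsProbabilityMeasure (μ n))
    (A₁ A₂ C : Set Ω)
    (hA₁ : MeasurableSet A₁) (hA₂ : MeasurableSet A₂) (hC : MeasurableSet C)
    (h₁ : ∀ k : ℕ, ∃ N : ℕ, ∀ n ≥ N,
      ENNReal.ofReal (1 - 1 / (n : ℝ) ^ k) * μ n A₁ ≤ μ n (A₁ ∩ C))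
    (h₂ : ∀ k : ℕ, ∃ N : ℕ, ∀ n ≥ N,
      ENNReal.ofReal (1 - 1 / (n : ℝ) ^ k) * μ n A₂ ≤ μ n (A₂ ∩ C)) :
    ∀ k : ℕ, ∃ N : ℕ, ∀ n ≥ N,
      ENNReal.ofReal (1 - 1 / (n : ℝ) ^ k) * μ n (A₁ ∪ A₂) ≤
        μ n ((A₁ ∪ A₂) ∩ C) :=
  KLM_OR_superpoly_general μ hμ A₁ A₂ C hC h₁ h₂
end

section
/- Let (μₙ)_{n∈ℕ} be a sequence of probability measures on a measurable space Ω and let A₁, A₂, C be measurable sets. Suppose that for every ε > 0 there exists N such that for all n ≥ N, μₙ(A₁ ∩ C) ≥ (1 − ε)·μₙ(A₁), and likewise for every ε > 0 there exists N such that for all n ≥ N, μₙ(A₂ ∩ C) ≥ (1 − ε)·μₙ(A₂). Then for every ε > 0 there exists N such that for all n ≥ N, μₙ((A₁ ∪ A₂) ∩ C) ≥ (1 − ε)·μₙ(A₁ ∪ A₂). (This is the soundness of the KLM disjunction rule OR under the limit (convergence) semantics, in which φ ⇒ ψ holds iff the conditional probability of ψ given φ under μₙ tends to 1.) -/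
open MeasureTheory

/-! Under `μ`, the condition `(1 - δ) μ A ≤ μ (A ∩ C)` says that `A \ C` has measure at most
`δ μ A`. The exceptional parts `A₁ \ C` and `A₂ \ C` cover `(A₁ ∪ A₂) \ C`, so their error
bounds add up: requiring `ε / 2` on each disjunct gives `ε` on the union. -/

namespace MeasureTheory

variable {Ω : Type*} [MeasurableSpace Ω] {μ : Measure Ω} [IsFiniteMeasure μ] {A C : Set Ω}
  {δ : ℝ}

theorem measure_sdiff_le_of_le_measure_inter (hC : MeasurableSet C)
    (h : ENNReal.ofReal (1 - δ) * μ A ≤ μ (A ∩ C)) :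
    μ (A \ C) ≤ ENNReal.ofReal δ * μ A := by
  have hsdiff : μ (A \ C) = μ A - μ (A ∩ C) :=
    ENNReal.eq_sub_of_add_eq (measure_ne_top μ _)
      ((add_comm _ _).trans (measure_inter_add_sdiff A hC))
  have hcoeff : 1 - ENNReal.ofReal (1 - δ) ≤ ENNReal.ofReal δ := by
    rw [tsub_le_iff_right]
    calc (1 : ENNReal) = ENNReal.ofReal ((1 - δ) + δ) := by simp
      _ ≤ ENNReal.ofReal (1 - δ) + ENNReal.ofReal δ := ENNReal.ofReal_add_le
      _ = ENNReal.ofReal δ + ENNReal.ofReal (1 - δ) := add_comm _ _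
  calc μ (A \ C) ≤ μ A - ENNReal.ofReal (1 - δ) * μ A := hsdiff ▸ tsub_le_tsub_left h _
    _ = (1 - ENNReal.ofReal (1 - δ)) * μ A := by
      rw [ENNReal.sub_mul fun _ _ => measure_ne_top μ _, one_mul]
    _ ≤ ENNReal.ofReal δ * μ A := by gcongr

theorem le_measure_inter_of_measure_sdiff_le (hδ : 0 ≤ δ)
    (h : μ (A \ C) ≤ ENNReal.ofReal δ * μ A) :
    ENNReal.ofReal (1 - δ) * μ A ≤ μ (A ∩ C) := by
  calc ENNReal.ofReal (1 - δ) * μ A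
      = μ A - ENNReal.ofReal δ * μ A := by
        rw [ENNReal.ofReal_sub _ hδ, ENNReal.ofReal_one,
          ENNReal.sub_mul fun _ _ => measure_ne_top μ _, one_mul]
    _ ≤ μ A - μ (A \ C) := tsub_le_tsub_left h _
    _ ≤ μ (A ∩ C) := tsub_le_iff_right.2 (measure_le_inter_add_sdiff μ A C)

theorem le_measure_union_inter {A₁ A₂ : Set Ω} {δ₁ δ₂ : ℝ} (hC : MeasurableSet C)
    (hδ₁ : 0 ≤ δ₁) (hδ₂ : 0 ≤ δ₂)
    (h₁ : ENNReal.ofReal (1 - δ₁) * μ A₁ ≤ μ (A₁ ∩ C))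
    (h₂ : ENNReal.ofReal (1 - δ₂) * μ A₂ ≤ μ (A₂ ∩ C)) :
    ENNReal.ofReal (1 - (δ₁ + δ₂)) * μ (A₁ ∪ A₂) ≤ μ ((A₁ ∪ A₂) ∩ C) := by
  refine le_measure_inter_of_measure_sdiff_le (add_nonneg hδ₁ hδ₂) ?_
  calc μ ((A₁ ∪ A₂) \ C) = μ ((A₁ \ C) ∪ (A₂ \ C)) := by rw [Set.union_sdiff_distrib]
    _ ≤ μ (A₁ \ C) + μ (A₂ \ C) := measure_union_le _ _
    _ ≤ ENNReal.ofReal δ₁ * μ A₁ + ENNReal.ofReal δ₂ * μ A₂ :=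
      add_le_add (measure_sdiff_le_of_le_measure_inter hC h₁)
        (measure_sdiff_le_of_le_measure_inter hC h₂)
    _ ≤ ENNReal.ofReal δ₁ * μ (A₁ ∪ A₂) + ENNReal.ofReal δ₂ * μ (A₁ ∪ A₂) := by
      gcongr
      exacts [Set.subset_union_left, Set.subset_union_right]
    _ = ENNReal.ofReal (δ₁ + δ₂) * μ (A₁ ∪ A₂) := by
      rw [← add_mul, ENNReal.ofReal_add hδ₁ hδ₂]

end MeasureTheory

theorem KLM_OR_limit_general {Ω : Type*} [MeasurableSpace Ω]
    (μ : ℕ → Measure Ω) (hμ : ∀ n, IsProbabilityMeasure (μ n))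
    (A₁ A₂ C : Set Ω)
    (hC : MeasurableSet C)
    (h₁ : ∀ ε : ℝ, 0 < ε → ∃ N : ℕ, ∀ n ≥ N,
      ENNReal.ofReal (1 - ε) * μ n A₁ ≤ μ n (A₁ ∩ C))
    (h₂ : ∀ ε : ℝ, 0 < ε → ∃ N : ℕ, ∀ n ≥ N,
      ENNReal.ofReal (1 - ε) * μ n A₂ ≤ μ n (A₂ ∩ C)) :
    ∀ ε : ℝ, 0 < ε → ∃ N : ℕ, ∀ n ≥ N,
      ENNReal.ofReal (1 - ε) * μ n (A₁ ∪ A₂) ≤ μ n ((A₁ ∪ A₂) ∩ C) := by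
  intro ε hε
  obtain ⟨N₁, hN₁⟩ := h₁ (ε / 2) (half_pos hε)
  obtain ⟨N₂, hN₂⟩ := h₂ (ε / 2) (half_pos hε)
  refine ⟨max N₁ N₂, fun n hn => ?_⟩
  have := hμ n
  simpa only [add_halves] using
    le_measure_union_inter hC (half_pos hε).le (half_pos hε).le
      (hN₁ n (le_of_max_le_left hn)) (hN₂ n (le_of_max_le_right hn))

/-- Soundness of the KLM disjunction rule OR under the limit (convergence)
semantics. -/
theorem KLM_OR_limit {Ω : Type*} [MeasurableSpace Ω]
    (μ : ℕ → Measure Ω) (hμ : ∀ n, IsProbabilityMeasure (μ n))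
    (A₁ A₂ C : Set Ω)
    (hA₁ : MeasurableSet A₁) (hA₂ : MeasurableSet A₂) (hC : MeasurableSet C)
    (h₁ : ∀ ε : ℝ, 0 < ε → ∃ N : ℕ, ∀ n ≥ N,
      ENNReal.ofReal (1 - ε) * μ n A₁ ≤ μ n (A₁ ∩ C))
    (h₂ : ∀ ε : ℝ, 0 < ε → ∃ N : ℕ, ∀ n ≥ N,
      ENNReal.ofReal (1 - ε) * μ n A₂ ≤ μ n (A₂ ∩ C)) :
    ∀ ε : ℝ, 0 < ε → ∃ N : ℕ, ∀ n ≥ N,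
      ENNReal.ofReal (1 - ε) * μ n (A₁ ∪ A₂) ≤ μ n ((A₁ ∪ A₂) ∩ C) :=
  KLM_OR_limit_general μ hμ A₁ A₂ C hC h₁ h₂
end

section
/- Let (μₙ)_{n∈ℕ} be a sequence of probability measures on a measurable space Ω and let A, B, C be measurable sets. Suppose that for every ε > 0 there exists N such that for all n ≥ N, μₙ(A ∩ B) ≥ (1 − ε)·μₙ(A), and likewise for every ε > 0 there exists N such that for all n ≥ N, μₙ(A ∩ C) ≥ (1 − ε)·μₙ(A). Then for every ε > 0 there exists N such that for all n ≥ N, μₙ(A ∩ B ∩ C) ≥ (1 − ε)·μₙ(A ∩ B). (This is the soundness of the KLM cautious-monotonicity rule CM under the limit (convergence) semantics.) -/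
open MeasureTheory

/-- Soundness of the KLM cautious-monotonicity rule CM under the limit
(convergence) semantics. -/
theorem KLM_CM_limit {Ω : Type*} [MeasurableSpace Ω]
    (μ : ℕ → Measure Ω) (hμ : ∀ n, IsProbabilityMeasure (μ n))
    (A B C : Set Ω)
    (hA : MeasurableSet A) (hB : MeasurableSet B) (hC : MeasurableSet C)
    (h₁ : ∀ ε : ℝ, 0 < ε → ∃ N : ℕ, ∀ n ≥ N,
      ENNReal.ofReal (1 - ε) * μ n A ≤ μ n (A ∩ B))
    (h₂ : ∀ ε : ℝ, 0 < ε → ∃ N : ℕ, ∀ n ≥ N,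
      ENNReal.ofReal (1 - ε) * μ n A ≤ μ n (A ∩ C)) :
    ∀ ε : ℝ, 0 < ε → ∃ N : ℕ, ∀ n ≥ N,
      ENNReal.ofReal (1 - ε) * μ n (A ∩ B) ≤ μ n (A ∩ B ∩ C) := by
  intro ε hε
  by_cases hε1 : 1 ≤ ε
  · refine ⟨0, fun n _ => ?_⟩
    rw [ENNReal.ofReal_eq_zero.mpr (by linarith)]
    simp
  push_neg at hε1
  have hδpos : (0:ℝ) < ε / 2 := by linarith
  obtain ⟨N₁, hN₁⟩ := h₁ (ε/2) hδpos
  obtain ⟨N₂, hN₂⟩ := h₂ (ε/2) hδpos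
  refine ⟨max N₁ N₂, fun n hn => ?_⟩
  have h1 := hN₁ n (le_trans (le_max_left _ _) hn)
  have h2 := hN₂ n (le_trans (le_max_right _ _) hn)
  haveI := hμ n
  have hfinAB : μ n (A ∩ B) ≠ ⊤ := measure_ne_top _ _
  have hfinAC : μ n (A ∩ C) ≠ ⊤ := measure_ne_top _ _
  -- μ(A∩B) = μ(A∩B∩C) + μ((A∩B)\C)
  have hsplit : μ n (A ∩ B ∩ C) + μ n ((A ∩ B) \ C) = μ n (A ∩ B) :=
    measure_inter_add_diff _ hC
  -- μ((A∩B)\C) ≤ μ(A\C) = μA - μ(A∩C)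
  have hdiff : μ n ((A ∩ B) \ C) ≤ μ n A - μ n (A ∩ C) := by
    have h5 : μ n (A \ (A ∩ C)) = μ n A - μ n (A ∩ C) :=
      measure_diff Set.inter_subset_left (hA.inter hC).nullMeasurableSet hfinAC
    calc μ n ((A ∩ B) \ C) ≤ μ n (A \ (A ∩ C)) := by
          apply measure_mono
          intro x hx
          exact ⟨hx.1.1, fun h => hx.2 h.2⟩
      _ = μ n A - μ n (A ∩ C) := h5
  -- μA - μ(A∩C) ≤ ofReal(ε/2) * μ A
  have hsum : ENNReal.ofReal (1 - ε/2) + ENNReal.ofReal (ε/2) = 1 := by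
    rw [← ENNReal.ofReal_add (by linarith) (by linarith)]
    norm_num
  have hAeq : μ n A = ENNReal.ofReal (1 - ε/2) * μ n A
      + ENNReal.ofReal (ε/2) * μ n A := by
    rw [← add_mul, hsum, one_mul]
  have hkey : μ n A - μ n (A ∩ C) ≤ ENNReal.ofReal (ε/2) * μ n A := by
    nth_rewrite 1 [hAeq]
    calc ENNReal.ofReal (1 - ε/2) * μ n A + ENNReal.ofReal (ε/2) * μ n A
          - μ n (A ∩ C)
        ≤ ENNReal.ofReal (1 - ε/2) * μ n A + ENNReal.ofReal (ε/2) * μ n A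
          - ENNReal.ofReal (1 - ε/2) * μ n A := by
          exact tsub_le_tsub_left h2 _
      _ = ENNReal.ofReal (ε/2) * μ n A := by
          rw [ENNReal.add_sub_cancel_left]
          exact ENNReal.mul_ne_top ENNReal.ofReal_ne_top (measure_ne_top _ _)
  -- ofReal(ε/2) * μ A ≤ ofReal ε * μ(A∩B)
  have hmul : ENNReal.ofReal (ε/2) * μ n A
      ≤ ENNReal.ofReal ε * μ n (A ∩ B) := by
    calc ENNReal.ofReal (ε/2) * μ n A
        ≤ (ENNReal.ofReal ε * ENNReal.ofReal (1 - ε/2)) * μ n A := by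
          gcongr
          rw [← ENNReal.ofReal_mul (le_of_lt hε)]
          exact ENNReal.ofReal_le_ofReal (by nlinarith)
      _ = ENNReal.ofReal ε * (ENNReal.ofReal (1 - ε/2) * μ n A) := by ring
      _ ≤ ENNReal.ofReal ε * μ n (A ∩ B) := by gcongr
  -- assemble: μ(A∩B) ≤ μ(A∩B∩C) + ofReal ε * μ(A∩B)
  have hmain : μ n (A ∩ B) ≤ μ n (A ∩ B ∩ C) + ENNReal.ofReal ε * μ n (A ∩ B) := by
    calc μ n (A ∩ B) = μ n (A ∩ B ∩ C) + μ n ((A ∩ B) \ C) := hsplit.symm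
      _ ≤ μ n (A ∩ B ∩ C) + ENNReal.ofReal ε * μ n (A ∩ B) := by
          gcongr
          exact le_trans hdiff (le_trans hkey hmul)
  -- cancel
  have hεfin : ENNReal.ofReal ε * μ n (A ∩ B) ≠ ⊤ :=
    ENNReal.mul_ne_top ENNReal.ofReal_ne_top hfinAB
  rw [← ENNReal.add_le_add_iff_right hεfin]
  calc ENNReal.ofReal (1 - ε) * μ n (A ∩ B) + ENNReal.ofReal ε * μ n (A ∩ B)
      = μ n (A ∩ B) := by
        rw [← add_mul, ← ENNReal.ofReal_add (by linarith) (le_of_lt hε)]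
        norm_num
    _ ≤ μ n (A ∩ B ∩ C) + ENNReal.ofReal ε * μ n (A ∩ B) := hmain
end
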